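/- arXiv:2603.12439 — 4 statements merged into one kernel-verified Lean document; each statement's English description precedes it below -/
import Mathlib

section
/- (Halanay inequality) Let t₀ ∈ ℝ and δ ≥ 0 be real constants, and let a > b ≥ 0 be real constants. Let w : [t₀ − δ, ∞) → [0,∞) be continuous, differentiable at every t ≥ t₀, and satisfy w′(t) ≤ −a·w(t) + b·max_{θ∈[−δ,0]} w(t+θ) for all t ≥ t₀. Then there exists a constant λ > 0 satisfying λ + b·e^{λδ} = a such that w(t) ≤ ( max_{θ∈[t₀−δ, t₀]} w(θ) )·e^{−λ(t − t₀)} for all t ≥ t₀. -/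
open Set Filter Topology

set_option maxHeartbeats 2000000 in
/-- Core step of the Halanay inequality proof. -/
lemma halanay_core (t₀ δ a b μ : ℝ) (hδ : 0 ≤ δ) (hb : 0 ≤ b) (hμ : 0 < μ)
    (hstrict : μ + b * Real.exp (μ * δ) < a)
    (w w' : ℝ → ℝ)
    (hw_cont : ContinuousOn w (Set.Ici (t₀ - δ)))
    (hw_nonneg : ∀ t, t₀ - δ ≤ t → 0 ≤ w t)
    (hderiv : ∀ t, t₀ ≤ t → HasDerivAt w (w' t) t)
    (hineq : ∀ t, t₀ ≤ t → w' t ≤ -a * w t + b * sSup (w '' Set.Icc (t - δ) t))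
    (ε : ℝ) (hε : 0 < ε) :
    ∀ t, t₀ ≤ t → w t * Real.exp (μ * (t - t₀)) ≤ sSup (w '' Set.Icc (t₀ - δ) t₀) + ε := by
  set M := sSup (w '' Set.Icc (t₀ - δ) t₀) with hM
  have hsub : Set.Icc (t₀ - δ) t₀ ⊆ Set.Ici (t₀ - δ) := Set.Icc_subset_Ici_self
  have hBdd : BddAbove (w '' Set.Icc (t₀ - δ) t₀) :=
    (isCompact_Icc.image_of_continuousOn (hw_cont.mono hsub)).bddAbove
  have ht0mem : t₀ ∈ Set.Icc (t₀ - δ) t₀ := ⟨by linarith, le_refl _⟩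
  have hwM : ∀ s, t₀ - δ ≤ s → s ≤ t₀ → w s ≤ M :=
    fun s h1 h2 => le_csSup hBdd ⟨s, ⟨h1, h2⟩, rfl⟩
  have hM0 : 0 ≤ M := le_trans (hw_nonneg t₀ (by linarith)) (hwM t₀ (by linarith) le_rfl)
  set v : ℝ → ℝ := fun t => w t * Real.exp (μ * (t - t₀)) with hv_def
  by_contra hcon
  push_neg at hcon
  obtain ⟨tb, htb, hvtb⟩ := hcon
  set S : Set ℝ := {t | t₀ ≤ t ∧ M + ε ≤ v t} with hS
  have hSne : S.Nonempty := ⟨tb, htb, le_of_lt hvtb⟩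
  have hSbdd : BddBelow S := ⟨t₀, fun x hx => hx.1⟩
  have hv_cont : ContinuousOn v (Set.Ici (t₀ - δ)) := by
    exact hw_cont.mul ((Real.continuous_exp.comp (by continuity)).continuousOn)
  have hSclosed : IsClosed S := by
    have : S = Set.Ici t₀ ∩ v ⁻¹' Set.Ici (M + ε) := by
      ext x; simp [hS, Set.mem_Ici, and_comm]
    rw [this]
    exact ContinuousOn.preimage_isClosed_of_isClosed
      (hv_cont.mono (Set.Ici_subset_Ici.mpr (by linarith))) isClosed_Ici isClosed_Ici
  set t₁ := sInf S with ht₁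
  have ht₁S : t₁ ∈ S := hSclosed.csInf_mem hSne hSbdd
  obtain ⟨ht₀t₁, hvt₁⟩ := ht₁S
  have hvt₀ : v t₀ < M + ε := by
    have : v t₀ = w t₀ := by simp [hv_def]
    rw [this]
    have := hwM t₀ (by linarith) le_rfl
    linarith
  have ht₀lt : t₀ < t₁ := by
    rcases lt_or_eq_of_le ht₀t₁ with h | h
    · exact h
    · exfalso; rw [← h] at hvt₁; linarith
  -- strict bound before t₁
  have h_lt : ∀ s, t₀ - δ ≤ s → s < t₁ → v s < M + ε := by
    intro s hs1 hs2
    rcases le_or_gt s t₀ with h | h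
    · have hws : w s ≤ M := hwM s hs1 h
      have hexp : Real.exp (μ * (s - t₀)) ≤ 1 := by
        rw [Real.exp_le_one_iff]
        nlinarith
      have : v s ≤ w s := by
        have := hw_nonneg s hs1
        calc v s = w s * Real.exp (μ * (s - t₀)) := rfl
          _ ≤ w s * 1 := by nlinarith [Real.exp_pos (μ * (s - t₀))]
          _ = w s := mul_one _
      linarith
    · by_contra hle
      push_neg at hle
      exact absurd (csInf_le hSbdd ⟨le_of_lt h, hle⟩) (not_le.mpr hs2)
  -- v is continuous at t₁
  have hwct₁ : ContinuousAt w t₁ := (hderiv t₁ ht₀t₁).continuousAt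
  have hvct₁ : ContinuousAt v t₁ :=
    hwct₁.mul ((Real.continuous_exp.comp (by continuity)).continuousAt)
  -- v t₁ = M + ε
  have hvle : v t₁ ≤ M + ε := by
    have htend : Filter.Tendsto v (𝓝[<] t₁) (𝓝 (v t₁)) :=
      hvct₁.continuousWithinAt.tendsto
    refine le_of_tendsto htend ?_
    filter_upwards [Ioo_mem_nhdsLT_of_mem (⟨by linarith, le_rfl⟩ : t₁ ∈ Set.Ioc (t₀ - δ) t₁)]
      with s hs
    exact le_of_lt (h_lt s (le_of_lt hs.1) hs.2)
  have hveq : v t₁ = M + ε := le_antisymm hvle hvt₁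
  have h_le : ∀ s, t₀ - δ ≤ s → s ≤ t₁ → v s ≤ M + ε := by
    intro s h1 h2
    rcases lt_or_eq_of_le h2 with h | h
    · exact le_of_lt (h_lt s h1 h)
    · rw [h]; exact hvle
  -- derivative of v at t₁
  set E := Real.exp (μ * (t₁ - t₀)) with hE_def
  have hEpos : 0 < E := Real.exp_pos _
  have hf : HasDerivAt (fun t => μ * (t - t₀)) μ t₁ := by
    simpa using ((hasDerivAt_id t₁).sub_const t₀).const_mul μ
  have hEderiv : HasDerivAt (fun t => Real.exp (μ * (t - t₀))) (E * μ) t₁ := hf.exp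
  have hvderiv : HasDerivAt v (w' t₁ * E + w t₁ * (E * μ)) t₁ :=
    (hderiv t₁ ht₀t₁).mul hEderiv
  set d := w' t₁ * E + w t₁ * (E * μ) with hd_def
  -- d ≥ 0 from the left
  have hd_nonneg : 0 ≤ d := by
    have hslope : Filter.Tendsto (slope v t₁) (𝓝[≠] t₁) (𝓝 d) :=
      hasDerivAt_iff_tendsto_slope.mp hvderiv
    have hslope' : Filter.Tendsto (slope v t₁) (𝓝[<] t₁) (𝓝 d) :=
      hslope.mono_left (nhdsWithin_mono _ (fun s hs => ne_of_lt hs))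
    refine ge_of_tendsto hslope' ?_
    filter_upwards [Ioo_mem_nhdsLT_of_mem (⟨by linarith, le_rfl⟩ : t₁ ∈ Set.Ioc (t₀ - δ) t₁)]
      with s hs
    rw [slope_def_field, div_nonneg_iff]
    right
    constructor
    · have := h_lt s (le_of_lt hs.1) hs.2
      rw [hveq]; linarith
    · linarith [hs.2]
  -- d < 0 from the differential inequality
  set K := Real.exp (μ * δ) with hK_def
  have hKpos : 0 < K := Real.exp_pos _
  have h1 : w t₁ * E = M + ε := hveq
  have h2 : w' t₁ ≤ -a * w t₁ + b * sSup (w '' Set.Icc (t₁ - δ) t₁) := hineq t₁ ht₀t₁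
  set Sup1 := sSup (w '' Set.Icc (t₁ - δ) t₁) with hSup1
  have hSupE : Sup1 * E ≤ (M + ε) * K := by
    have hne : (w '' Set.Icc (t₁ - δ) t₁).Nonempty :=
      ⟨w t₁, t₁, ⟨by linarith, le_rfl⟩, rfl⟩
    have hbound : Sup1 ≤ (M + ε) * K / E := by
      apply csSup_le hne
      rintro x ⟨s, ⟨hs1, hs2⟩, rfl⟩
      have hs0 : t₀ - δ ≤ s := by linarith
      rw [le_div_iff₀ hEpos]
      have hEdecomp : E = Real.exp (μ * (s - t₀)) * Real.exp (μ * (t₁ - s)) := by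
        rw [hE_def, ← Real.exp_add]; congr 1; ring
      have hvs : w s * Real.exp (μ * (s - t₀)) ≤ M + ε := h_le s hs0 hs2
      have hexp2 : Real.exp (μ * (t₁ - s)) ≤ K := by
        rw [hK_def, Real.exp_le_exp]
        exact mul_le_mul_of_nonneg_left (by linarith) (le_of_lt hμ)
      calc w s * E = (w s * Real.exp (μ * (s - t₀))) * Real.exp (μ * (t₁ - s)) := by
            rw [hEdecomp]; ring
        _ ≤ (M + ε) * K := mul_le_mul hvs hexp2 (le_of_lt (Real.exp_pos _)) (by linarith)
    calc Sup1 * E ≤ ((M + ε) * K / E) * E := mul_le_mul_of_nonneg_right hbound (le_of_lt hEpos)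
      _ = (M + ε) * K := by field_simp
  have hMε : 0 < M + ε := by linarith
  clear_value d E K Sup1 M
  have hd_neg : d < 0 := by
    have hstep1 : w' t₁ * E ≤ (-a * w t₁ + b * Sup1) * E :=
      mul_le_mul_of_nonneg_right h2 (le_of_lt hEpos)
    have hstep2 : d ≤ (μ - a) * (w t₁ * E) + b * (Sup1 * E) := by
      rw [hd_def]
      have : (-a * w t₁ + b * Sup1) * E + w t₁ * (E * μ)
          = (μ - a) * (w t₁ * E) + b * (Sup1 * E) := by ring
      linarith
    have h4 : b * (Sup1 * E) ≤ b * ((M + ε) * K) := mul_le_mul_of_nonneg_left hSupE hb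
    have h5 : (μ - a) * (w t₁ * E) = (μ - a) * (M + ε) := by rw [h1]
    have h6 : d ≤ (M + ε) * (μ - a + b * K) := by
      have : (μ - a) * (M + ε) + b * ((M + ε) * K) = (M + ε) * (μ - a + b * K) := by ring
      linarith
    have h7 : (M + ε) * (μ - a + b * K) < 0 :=
      mul_neg_of_pos_of_neg hMε (by linarith)
    linarith
  linarith


/-- Lemma 1 (Halanay inequality): if `w ≥ 0` is continuous on `[t₀-δ, ∞)`, differentiable
at every `t ≥ t₀` with `w'(t) ≤ -a w(t) + b max_{θ∈[-δ,0]} w(t+θ)` and `a > b ≥ 0`, then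
there is `λ > 0` with `λ + b e^{λδ} = a` such that
`w(t) ≤ (max_{[t₀-δ,t₀]} w) e^{-λ(t-t₀)}` for all `t ≥ t₀`. -/
theorem halanay_inequality (t₀ δ a b : ℝ) (hδ : 0 ≤ δ) (hb : 0 ≤ b) (hab : b < a)
    (w w' : ℝ → ℝ)
    (hw_cont : ContinuousOn w (Set.Ici (t₀ - δ)))
    (hw_nonneg : ∀ t, t₀ - δ ≤ t → 0 ≤ w t)
    (hderiv : ∀ t, t₀ ≤ t → HasDerivAt w (w' t) t)
    (hineq : ∀ t, t₀ ≤ t → w' t ≤ -a * w t + b * sSup (w '' Set.Icc (t - δ) t)) :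
    ∃ lam : ℝ, 0 < lam ∧ lam + b * Real.exp (lam * δ) = a ∧
      ∀ t, t₀ ≤ t → w t ≤ sSup (w '' Set.Icc (t₀ - δ) t₀) * Real.exp (-lam * (t - t₀)) := by
  -- find lam by IVT
  have ha0 : 0 < a := lt_of_le_of_lt hb hab
  set f : ℝ → ℝ := fun x => x + b * Real.exp (x * δ) with hf_def
  have hfc : ContinuousOn f (Set.Icc 0 a) := by
    apply Continuous.continuousOn; continuity
  have hivt := intermediate_value_Icc (le_of_lt ha0) hfc
  have hmem : a ∈ Set.Icc (f 0) (f a) := by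
    constructor
    · simp [hf_def]; linarith
    · simp only [hf_def]
      nlinarith [Real.exp_pos (a * δ)]
  obtain ⟨lam, hlamIcc, hlam_eq⟩ := hivt hmem
  have hlam_eq' : lam + b * Real.exp (lam * δ) = a := hlam_eq
  have hlam_pos : 0 < lam := by
    rcases lt_or_eq_of_le hlamIcc.1 with h | h
    · exact h
    · exfalso
      rw [← h] at hlam_eq
      simp [hf_def] at hlam_eq
      linarith
  refine ⟨lam, hlam_pos, hlam_eq', ?_⟩
  intro t ht
  set M := sSup (w '' Set.Icc (t₀ - δ) t₀) with hM
  -- for each μ ∈ (0, lam), strict inequality version holds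
  have key : ∀ μ, 0 < μ → μ < lam → w t ≤ M * Real.exp (-μ * (t - t₀)) := by
    intro μ hμ0 hμlam
    have hstrict : μ + b * Real.exp (μ * δ) < a := by
      have h1 : Real.exp (μ * δ) ≤ Real.exp (lam * δ) := by
        rw [Real.exp_le_exp]; nlinarith
      have h2 : b * Real.exp (μ * δ) ≤ b * Real.exp (lam * δ) := by nlinarith
      linarith [hlam_eq']
    have hall : ∀ ε > 0, w t * Real.exp (μ * (t - t₀)) ≤ M + ε := fun ε hε =>
      halanay_core t₀ δ a b μ hδ hb hμ0 hstrict w w' hw_cont hw_nonneg hderiv hineq ε hε t ht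
    have hle : w t * Real.exp (μ * (t - t₀)) ≤ M := le_of_forall_pos_le_add hall
    have hEpos : (0:ℝ) < Real.exp (μ * (t - t₀)) := Real.exp_pos _
    rw [show -μ * (t - t₀) = -(μ * (t - t₀)) by ring, Real.exp_neg, ← div_eq_mul_inv,
      le_div_iff₀ hEpos]
    exact hle
  -- pass to the limit μ → lam⁻
  have htend : Filter.Tendsto (fun μ => M * Real.exp (-μ * (t - t₀))) (𝓝[<] lam)
      (𝓝 (M * Real.exp (-lam * (t - t₀)))) := by
    apply Filter.Tendsto.mono_left _ nhdsWithin_le_nhds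
    exact (Continuous.tendsto (by continuity) lam)
  refine ge_of_tendsto htend ?_
  filter_upwards [Ioo_mem_nhdsLT_of_mem (⟨hlam_pos, le_rfl⟩ : lam ∈ Set.Ioc 0 lam)]
    with μ hμ
  exact key μ hμ.1 hμ.2
end

section
/- Let β₁, β̄₁, β̄₂ be class-KL functions, γ₁, γ̄₁ class-K functions, r ≥ 0 a real number, and X, E : [0,∞) → [0,∞) functions such that: (i) X(t) ≤ β₁(r, t) + γ₁( sup_{0≤τ≤t} E(τ) ) for all t ≥ 0; (ii) X(t) ≤ β̄₁(X(s), t−s) + γ̄₁( sup_{s≤τ≤t} E(τ) ) for all 0 ≤ s ≤ t; (iii) E(t) ≤ β̄₂(r, t) for all t ≥ 0, and assume sup_{0≤τ≤t} E(τ) is finite for each t. Define β(ρ, t) := β̄₁( β₁(ρ, t/2) + γ₁(β̄₂(ρ, 0)), t/2 ) + γ̄₁( β̄₂(ρ, t/2) ) + β̄₂(ρ, t) for ρ, t ≥ 0. Then X(t) + E(t) ≤ β(r, t) for all t ≥ 0, and β is a class-KL function. -/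
open Set Filter Topology

/-- A function `γ : [0,∞) → [0,∞)` is of class K if it is continuous, strictly
increasing and `γ(0) = 0`. -/
def ClassK (γ : ℝ → ℝ) : Prop :=
  ContinuousOn γ (Set.Ici 0) ∧ StrictMonoOn γ (Set.Ici 0) ∧ γ 0 = 0

/-- Class KL. -/
def ClassKL (β : ℝ → ℝ → ℝ) : Prop :=
  (∀ t, 0 ≤ t → ClassK fun s => β s t) ∧
  (∀ s, 0 ≤ s → AntitoneOn (β s) (Set.Ici 0) ∧ Filter.Tendsto (β s) Filter.atTop (nhds 0))

lemma classK_nonneg {γ : ℝ → ℝ} (h : ClassK γ) {s : ℝ} (hs : 0 ≤ s) : 0 ≤ γ s := by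
  rw [← h.2.2]
  exact h.2.1.monotoneOn Set.self_mem_Ici hs hs

lemma classK_mono {γ : ℝ → ℝ} (h : ClassK γ) {a b : ℝ} (ha : 0 ≤ a) (hb : 0 ≤ b)
    (hab : a ≤ b) : γ a ≤ γ b :=
  h.2.1.monotoneOn ha hb hab

lemma classKL_nonneg {β : ℝ → ℝ → ℝ} (h : ClassKL β) {s t : ℝ} (hs : 0 ≤ s) (ht : 0 ≤ t) :
    0 ≤ β s t :=
  classK_nonneg (h.1 t ht) hs

lemma classKL_mono_fst {β : ℝ → ℝ → ℝ} (h : ClassKL β) {a b t : ℝ} (ha : 0 ≤ a) (hb : 0 ≤ b)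
    (hab : a ≤ b) (ht : 0 ≤ t) : β a t ≤ β b t :=
  (h.1 t ht).2.1.monotoneOn ha hb hab

lemma classKL_anti_snd {β : ℝ → ℝ → ℝ} (h : ClassKL β) {s a b : ℝ} (hs : 0 ≤ s) (ha : 0 ≤ a)
    (hb : 0 ≤ b) (hab : a ≤ b) : β s b ≤ β s a :=
  (h.2 s hs).1 ha hb hab

/-- The quantitative core of the cascade lemma (Lemma 4): combining an ISS-type bound
for `X` in terms of `E`, a restart bound for `X`, and a KL bound for `E`, yields a KL
bound for `X + E` given explicitly by
`β(ρ,t) = β̄₁(β₁(ρ,t/2) + γ₁(β̄₂(ρ,0)), t/2) + γ̄₁(β̄₂(ρ,t/2)) + β̄₂(ρ,t)`. -/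
theorem cascade_KL_quantitative
    (β₁ β₁' β₂' : ℝ → ℝ → ℝ) (γ₁ γ₁' : ℝ → ℝ) (r : ℝ)
    (hβ₁ : ClassKL β₁) (hβ₁' : ClassKL β₁') (hβ₂' : ClassKL β₂')
    (hγ₁ : ClassK γ₁) (hγ₁' : ClassK γ₁') (hr : 0 ≤ r)
    (X E : ℝ → ℝ) (hX : ∀ t, 0 ≤ t → 0 ≤ X t) (hE : ∀ t, 0 ≤ t → 0 ≤ E t)
    (hbdd : ∀ t, 0 ≤ t → BddAbove (E '' Set.Icc 0 t))
    (h1 : ∀ t, 0 ≤ t → X t ≤ β₁ r t + γ₁ (sSup (E '' Set.Icc 0 t)))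
    (h2 : ∀ s t, 0 ≤ s → s ≤ t → X t ≤ β₁' (X s) (t - s) + γ₁' (sSup (E '' Set.Icc s t)))
    (h3 : ∀ t, 0 ≤ t → E t ≤ β₂' r t) :
    (∀ t, 0 ≤ t → X t + E t ≤
      β₁' (β₁ r (t / 2) + γ₁ (β₂' r 0)) (t / 2) + γ₁' (β₂' r (t / 2)) + β₂' r t) ∧
    ClassKL (fun ρ t =>
      β₁' (β₁ ρ (t / 2) + γ₁ (β₂' ρ 0)) (t / 2) + γ₁' (β₂' ρ (t / 2)) + β₂' ρ t) := by
  constructor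
  · -- the quantitative bound
    intro t ht
    have ht2 : (0:ℝ) ≤ t / 2 := by linarith
    have ht2' : t / 2 ≤ t := by linarith
    -- bound on sSup (E '' Icc (t/2) t)
    have hsub : E '' Set.Icc (t/2) t ⊆ E '' Set.Icc 0 t :=
      Set.image_mono (Set.Icc_subset_Icc ht2 le_rfl)
    have hbdd2 : BddAbove (E '' Set.Icc (t/2) t) := (hbdd t ht).mono hsub
    have hne2 : (E '' Set.Icc (t/2) t).Nonempty :=
      ⟨E t, ⟨t, ⟨ht2', le_rfl⟩, rfl⟩⟩
    have hS2_le : sSup (E '' Set.Icc (t/2) t) ≤ β₂' r (t/2) := by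
      apply csSup_le hne2
      rintro x ⟨τ, ⟨hτ1, hτ2⟩, rfl⟩
      have hτ0 : 0 ≤ τ := le_trans ht2 hτ1
      exact (h3 τ hτ0).trans (classKL_anti_snd hβ₂' hr ht2 hτ0 hτ1)
    have hS2_nonneg : 0 ≤ sSup (E '' Set.Icc (t/2) t) :=
      le_trans (hE t ht) (le_csSup hbdd2 ⟨t, ⟨ht2', le_rfl⟩, rfl⟩)
    -- bound on sSup (E '' Icc 0 (t/2))
    have hbdd1 : BddAbove (E '' Set.Icc 0 (t/2)) := hbdd (t/2) ht2
    have hne1 : (E '' Set.Icc 0 (t/2)).Nonempty :=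
      ⟨E 0, ⟨0, ⟨le_rfl, ht2⟩, rfl⟩⟩
    have hS1_le : sSup (E '' Set.Icc 0 (t/2)) ≤ β₂' r 0 := by
      apply csSup_le hne1
      rintro x ⟨τ, ⟨hτ1, hτ2⟩, rfl⟩
      exact (h3 τ hτ1).trans (classKL_anti_snd hβ₂' hr le_rfl hτ1 hτ1)
    have hS1_nonneg : 0 ≤ sSup (E '' Set.Icc 0 (t/2)) :=
      le_trans (hE 0 le_rfl) (le_csSup hbdd1 ⟨0, ⟨le_rfl, ht2⟩, rfl⟩)
    have hβ₂'0 : 0 ≤ β₂' r 0 := classKL_nonneg hβ₂' hr le_rfl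
    have hβ₂'t2 : 0 ≤ β₂' r (t/2) := classKL_nonneg hβ₂' hr ht2
    -- X(t/2) bound
    have hXhalf : X (t/2) ≤ β₁ r (t/2) + γ₁ (β₂' r 0) := by
      have := h1 (t/2) ht2
      have hγ : γ₁ (sSup (E '' Set.Icc 0 (t/2))) ≤ γ₁ (β₂' r 0) :=
        classK_mono hγ₁ hS1_nonneg hβ₂'0 hS1_le
      linarith
    have hXt := h2 (t/2) t ht2 ht2'
    rw [show t - t/2 = t/2 by ring] at hXt
    have harg_nonneg : (0:ℝ) ≤ β₁ r (t/2) + γ₁ (β₂' r 0) :=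
      add_nonneg (classKL_nonneg hβ₁ hr ht2) (classK_nonneg hγ₁ hβ₂'0)
    have hterm1 : β₁' (X (t/2)) (t/2) ≤ β₁' (β₁ r (t/2) + γ₁ (β₂' r 0)) (t/2) :=
      classKL_mono_fst hβ₁' (hX _ ht2) harg_nonneg hXhalf ht2
    have hterm2 : γ₁' (sSup (E '' Set.Icc (t/2) t)) ≤ γ₁' (β₂' r (t/2)) :=
      classK_mono hγ₁' hS2_nonneg hβ₂'t2 hS2_le
    have hterm3 := h3 t ht
    linarith
  · -- class KL property
    constructor
    · -- class K in the first argument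
      intro t ht
      have ht2 : (0:ℝ) ≤ t / 2 := by linarith
      refine ⟨?_, ?_, ?_⟩
      · -- continuity
        have hc1 : ContinuousOn (fun ρ => β₁ ρ (t/2) + γ₁ (β₂' ρ 0)) (Set.Ici 0) := by
          apply ContinuousOn.add (hβ₁.1 (t/2) ht2).1
          exact (hγ₁.1.comp (hβ₂'.1 0 le_rfl).1
            (fun ρ hρ => classKL_nonneg hβ₂' hρ le_rfl))
        have hmaps1 : Set.MapsTo (fun ρ => β₁ ρ (t/2) + γ₁ (β₂' ρ 0)) (Set.Ici 0)
            (Set.Ici 0) := fun ρ hρ =>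
          add_nonneg (classKL_nonneg hβ₁ hρ ht2)
            (classK_nonneg hγ₁ (classKL_nonneg hβ₂' hρ le_rfl))
        refine ContinuousOn.add (ContinuousOn.add ?_ ?_) (hβ₂'.1 t ht).1
        · exact (hβ₁'.1 (t/2) ht2).1.comp hc1 hmaps1
        · exact hγ₁'.1.comp (hβ₂'.1 (t/2) ht2).1
            (fun ρ hρ => classKL_nonneg hβ₂' hρ ht2)
      · -- strict monotonicity
        intro a ha b hb hab
        simp only
        have hβ₂'a0 : 0 ≤ β₂' a 0 := classKL_nonneg hβ₂' ha le_rfl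
        have hβ₂'b0 : 0 ≤ β₂' b 0 := classKL_nonneg hβ₂' hb le_rfl
        have harg : β₁ a (t/2) + γ₁ (β₂' a 0) < β₁ b (t/2) + γ₁ (β₂' b 0) := by
          have h1' : β₁ a (t/2) < β₁ b (t/2) := (hβ₁.1 (t/2) ht2).2.1 ha hb hab
          have h2' : γ₁ (β₂' a 0) ≤ γ₁ (β₂' b 0) :=
            classK_mono hγ₁ hβ₂'a0 hβ₂'b0
              (classKL_mono_fst hβ₂' ha hb hab.le le_rfl)
          linarith
        have hna : (0:ℝ) ≤ β₁ a (t/2) + γ₁ (β₂' a 0) :=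
          add_nonneg (classKL_nonneg hβ₁ ha ht2) (classK_nonneg hγ₁ hβ₂'a0)
        have hnb : (0:ℝ) ≤ β₁ b (t/2) + γ₁ (β₂' b 0) :=
          add_nonneg (classKL_nonneg hβ₁ hb ht2) (classK_nonneg hγ₁ hβ₂'b0)
        have hT1 : β₁' (β₁ a (t/2) + γ₁ (β₂' a 0)) (t/2)
            < β₁' (β₁ b (t/2) + γ₁ (β₂' b 0)) (t/2) :=
          (hβ₁'.1 (t/2) ht2).2.1 hna hnb harg
        have hT2 : γ₁' (β₂' a (t/2)) < γ₁' (β₂' b (t/2)) :=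
          hγ₁'.2.1 (classKL_nonneg hβ₂' ha ht2) (classKL_nonneg hβ₂' hb ht2)
            ((hβ₂'.1 (t/2) ht2).2.1 ha hb hab)
        have hT3 : β₂' a t < β₂' b t := (hβ₂'.1 t ht).2.1 ha hb hab
        linarith
      · -- value at 0
        simp only
        have e1 : β₁ 0 (t/2) = 0 := (hβ₁.1 (t/2) ht2).2.2
        have e2 : β₂' 0 0 = 0 := (hβ₂'.1 0 le_rfl).2.2
        have e3 : β₂' 0 (t/2) = 0 := (hβ₂'.1 (t/2) ht2).2.2
        have e4 : β₂' 0 t = 0 := (hβ₂'.1 t ht).2.2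
        rw [e1, e2, hγ₁.2.2, add_zero, show β₁' 0 (t/2) = 0 from (hβ₁'.1 (t/2) ht2).2.2, e3, hγ₁'.2.2, e4]
        ring
    · -- KL in the second argument
      intro s hs
      have hβ₂'s0 : 0 ≤ β₂' s 0 := classKL_nonneg hβ₂' hs le_rfl
      have hγconst : 0 ≤ γ₁ (β₂' s 0) := classK_nonneg hγ₁ hβ₂'s0
      have hc_nonneg : ∀ t, 0 ≤ t → (0:ℝ) ≤ β₁ s (t/2) + γ₁ (β₂' s 0) := fun t ht =>
        add_nonneg (classKL_nonneg hβ₁ hs (by linarith)) hγconst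
      constructor
      · -- antitone
        intro a ha b hb hab
        simp only at *
        have ha : (0:ℝ) ≤ a := ha
        have hb : (0:ℝ) ≤ b := hb
        have ha2 : (0:ℝ) ≤ a/2 := by linarith
        have hb2 : (0:ℝ) ≤ b/2 := by linarith
        have hab2 : a/2 ≤ b/2 := by linarith
        have hcba : β₁ s (b/2) + γ₁ (β₂' s 0) ≤ β₁ s (a/2) + γ₁ (β₂' s 0) := by
          have := classKL_anti_snd hβ₁ hs ha2 hb2 hab2
          linarith
        have hT1 : β₁' (β₁ s (b/2) + γ₁ (β₂' s 0)) (b/2)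
            ≤ β₁' (β₁ s (a/2) + γ₁ (β₂' s 0)) (a/2) := by
          calc β₁' (β₁ s (b/2) + γ₁ (β₂' s 0)) (b/2)
              ≤ β₁' (β₁ s (a/2) + γ₁ (β₂' s 0)) (b/2) :=
                classKL_mono_fst hβ₁' (hc_nonneg b hb) (hc_nonneg a ha) hcba hb2
            _ ≤ β₁' (β₁ s (a/2) + γ₁ (β₂' s 0)) (a/2) :=
                classKL_anti_snd hβ₁' (hc_nonneg a ha) ha2 hb2 hab2
        have hT2 : γ₁' (β₂' s (b/2)) ≤ γ₁' (β₂' s (a/2)) :=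
          classK_mono hγ₁' (classKL_nonneg hβ₂' hs hb2) (classKL_nonneg hβ₂' hs ha2)
            (classKL_anti_snd hβ₂' hs ha2 hb2 hab2)
        have hT3 : β₂' s b ≤ β₂' s a := classKL_anti_snd hβ₂' hs ha hb hab
        linarith
      · -- tendsto 0
        have hhalf : Tendsto (fun t : ℝ => t / 2) atTop atTop :=
          tendsto_id.atTop_div_const (by norm_num)
        have hT3 : Tendsto (fun t => β₂' s t) atTop (nhds 0) := (hβ₂'.2 s hs).2
        have hTin : Tendsto (fun t => β₂' s (t/2)) atTop (nhds 0) := hT3.comp hhalf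
        have hTin' : Tendsto (fun t => β₂' s (t/2)) atTop (nhdsWithin 0 (Set.Ici 0)) := by
          rw [tendsto_nhdsWithin_iff]
          refine ⟨hTin, ?_⟩
          filter_upwards [eventually_ge_atTop (0:ℝ)] with t ht
          exact classKL_nonneg hβ₂' hs (by linarith)
        have hT2 : Tendsto (fun t => γ₁' (β₂' s (t/2))) atTop (nhds 0) := by
          have hcw : Tendsto γ₁' (nhdsWithin 0 (Set.Ici 0)) (nhds (γ₁' 0)) :=
            hγ₁'.1 0 Set.self_mem_Ici
          rw [hγ₁'.2.2] at hcw
          exact hcw.comp hTin'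
        have hT1 : Tendsto (fun t => β₁' (β₁ s (t/2) + γ₁ (β₂' s 0)) (t/2)) atTop
            (nhds 0) := by
          have hM : (0:ℝ) ≤ β₁ s 0 + γ₁ (β₂' s 0) := by
            have := hc_nonneg 0 le_rfl
            norm_num at this
            linarith
          have hupper : Tendsto (fun t => β₁' (β₁ s 0 + γ₁ (β₂' s 0)) (t/2)) atTop
              (nhds 0) := (hβ₁'.2 _ hM).2.comp hhalf
          refine tendsto_of_tendsto_of_tendsto_of_le_of_le' tendsto_const_nhds hupper
            ?_ ?_
          · filter_upwards [eventually_ge_atTop (0:ℝ)] with t ht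
            exact classKL_nonneg hβ₁' (hc_nonneg t ht) (by linarith)
          · filter_upwards [eventually_ge_atTop (0:ℝ)] with t ht
            have ht2 : (0:ℝ) ≤ t/2 := by linarith
            have hle : β₁ s (t/2) + γ₁ (β₂' s 0) ≤ β₁ s 0 + γ₁ (β₂' s 0) := by
              have := classKL_anti_snd hβ₁ hs le_rfl ht2 ht2
              linarith
            exact classKL_mono_fst hβ₁' (hc_nonneg t ht) hM hle ht2
        have := (hT1.add hT2).add hT3
        simpa using this
end

section
/- Let n, p ∈ ℕ, δ ≥ 0, d ≥ 0, L_f > 0, and let f : C([−δ,0],ℝⁿ) × ℝᵖ → ℝⁿ be globally Lipschitz continuous with constant L_f and f(0,0) = 0. Let 0 < T < ∞, let u : [−d, T) → ℝᵖ be bounded, and let x : [−δ, T) → ℝⁿ be continuous, differentiable at every t ∈ [0,T), with x′(t) = f(x_t, u(t−d)) for all t ∈ [0,T). Then x is bounded on [−δ, T); in particular, solutions of the globally Lipschitz retarded system cannot blow up in finite time (the system is forward complete). -/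
open Set Filter Topology MeasureTheory

/-- Forward completeness of globally Lipschitz retarded systems: a solution of
`ẋ(t) = f(x_t, u(t-d))` on `[0,T)`, `T < ∞`, with bounded input cannot blow up in
finite time. Here `xseg t` is the history segment `x_t ∈ C([-δ,0],ℝⁿ)`,
i.e. `xseg t θ = x(t+θ)`. -/
theorem globally_lipschitz_retarded_no_finite_time_blowup
    (n p : ℕ) (δ d Lf T : ℝ) (hδ : 0 ≤ δ) (hd : 0 ≤ d) (hLf : 0 < Lf) (hT : 0 < T)
    (f : C(Set.Icc (-δ) (0:ℝ), EuclideanSpace ℝ (Fin n)) → EuclideanSpace ℝ (Fin p) →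
      EuclideanSpace ℝ (Fin n))
    (hf0 : f 0 0 = 0)
    (hfLip : ∀ φ ψ u v, ‖f φ u - f ψ v‖ ≤ Lf * (‖φ - ψ‖ + ‖u - v‖))
    (u : ℝ → EuclideanSpace ℝ (Fin p))
    (hu : ∃ M : ℝ, ∀ s ∈ Set.Ico (-d) T, ‖u s‖ ≤ M)
    (x : ℝ → EuclideanSpace ℝ (Fin n))
    (hx : ContinuousOn x (Set.Ico (-δ) T))
    (xseg : ℝ → C(Set.Icc (-δ) (0:ℝ), EuclideanSpace ℝ (Fin n)))
    (hseg : ∀ t ∈ Set.Ico (0:ℝ) T, ∀ θ : Set.Icc (-δ) (0:ℝ), xseg t θ = x (t + θ.1))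
    (hode : ∀ t ∈ Set.Ico (0:ℝ) T,
      HasDerivWithinAt x (f (xseg t) (u (t - d))) (Set.Ico (-δ) T) t) :
    ∃ M : ℝ, ∀ t ∈ Set.Ico (-δ) T, ‖x t‖ ≤ M := by
  obtain ⟨M0, hM0⟩ := hu
  set M' : ℝ := max M0 0 with hM'def
  have hM' : (0:ℝ) ≤ M' := le_max_right _ _
  have huM : ∀ s ∈ Set.Ico (-d) T, ‖u s‖ ≤ M' := fun s hs => (hM0 s hs).trans (le_max_left _ _)
  -- initial bound on `[-δ, 0]`
  have hIcc0 : Set.Icc (-δ) (0:ℝ) ⊆ Set.Ico (-δ) T := fun s hs => ⟨hs.1, lt_of_le_of_lt hs.2 hT⟩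
  obtain ⟨C0, hC0⟩ := isCompact_Icc.exists_bound_of_continuousOn (hx.mono hIcc0)
  set C0' : ℝ := max C0 0 with hC0'def
  have hC0' : (0:ℝ) ≤ C0' := le_max_right _ _
  have hC0'' : ∀ s ∈ Set.Icc (-δ) (0:ℝ), ‖x s‖ ≤ C0' :=
    fun s hs => (hC0 s hs).trans (le_max_left _ _)
  -- the time step
  set h : ℝ := (2*Lf)⁻¹ with hh
  have hhpos : (0:ℝ) < h := by positivity
  have hLfh : Lf * h = 1/2 := by rw [hh]; field_simp
  -- the derivative function
  set g : ℝ → EuclideanSpace ℝ (Fin n) := fun s => f (xseg s) (u (s - d)) with hg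
  have key : ∀ k : ℕ, ∃ B : ℝ, 0 ≤ B ∧ ∀ t, -δ ≤ t → t < T → t ≤ k * h → ‖x t‖ ≤ B := by
    intro k
    induction k with
    | zero =>
      exact ⟨C0', hC0', fun t h1 h2 h3 => hC0'' t ⟨h1, by simpa using h3⟩⟩
    | succ k ih =>
      obtain ⟨B, hB0, hB⟩ := ih
      refine ⟨2*B + M', by positivity, fun t ht1 ht2 ht3 => ?_⟩
      by_cases htk : t ≤ k*h
      · exact (hB t ht1 ht2 htk).trans (by linarith)
      push_neg at htk
      set t0 : ℝ := k*h with ht0def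
      have ht00 : (0:ℝ) ≤ t0 := by positivity
      have ht0t : t0 < t := htk
      have ht0T : t0 < T := lt_trans ht0t ht2
      have htt0 : t - t0 ≤ h := by
        have : t ≤ (k+1)*h := by push_cast at ht3 ⊢; linarith
        rw [ht0def]; linarith
      have hsub : Set.Icc (-δ) t ⊆ Set.Ico (-δ) T :=
        fun s hs => ⟨hs.1, lt_of_le_of_lt hs.2 ht2⟩
      have hδt : -δ ≤ t := by linarith
      have hcomp : IsCompact ((fun s => ‖x s‖) '' Set.Icc (-δ) t) :=
        isCompact_Icc.image_of_continuousOn (hx.mono hsub).norm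
      set Q : ℝ := sSup ((fun s => ‖x s‖) '' Set.Icc (-δ) t) with hQdef
      have hbdd : BddAbove ((fun s => ‖x s‖) '' Set.Icc (-δ) t) := hcomp.bddAbove
      have hQle : ∀ s ∈ Set.Icc (-δ) t, ‖x s‖ ≤ Q := fun s hs => le_csSup hbdd ⟨s, hs, rfl⟩
      have hQ0 : (0:ℝ) ≤ Q := le_trans (norm_nonneg _) (hQle t ⟨hδt, le_refl t⟩)
      -- bound on g on (t0, t]
      have hgb : ∀ s, t0 < s → s ≤ t → ‖g s‖ ≤ Lf * (Q + M') := by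
        intro s hs1 hs2
        have hs0 : (0:ℝ) ≤ s := le_of_lt (lt_of_le_of_lt ht00 hs1)
        have hsT : s < T := lt_of_le_of_lt hs2 ht2
        have h1 : ‖xseg s‖ ≤ Q := by
          rw [ContinuousMap.norm_le _ hQ0]
          intro θ
          rw [hseg s ⟨hs0, hsT⟩ θ]
          exact hQle _ ⟨by have := θ.2.1; linarith, by have := θ.2.2; linarith⟩
        have h2 : ‖u (s - d)‖ ≤ M' := huM _ ⟨by linarith, by linarith⟩
        calc ‖g s‖ = ‖f (xseg s) (u (s-d)) - f 0 0‖ := by rw [hf0, sub_zero]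
        _ ≤ Lf * (‖xseg s - 0‖ + ‖u (s-d) - 0‖) := hfLip _ _ _ _
        _ = Lf * (‖xseg s‖ + ‖u (s-d)‖) := by rw [sub_zero, sub_zero]
        _ ≤ Lf * (Q + M') := by nlinarith [norm_nonneg (xseg s), norm_nonneg (u (s-d))]
      -- main estimate on `[t0, t]` via FTC
      have hmain : ∀ r ∈ Set.Icc t0 t, ‖x r‖ ≤ B + (Q + M')/2 := by
        intro r hr
        have hrT : r < T := lt_of_le_of_lt hr.2 ht2
        have hderiv : ∀ s ∈ Set.Ioo t0 r, HasDerivAt x (g s) s := by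
          intro s hs
          have hs0 : (0:ℝ) ≤ s := le_of_lt (lt_of_le_of_lt ht00 hs.1)
          have hsT : s < T := lt_trans hs.2 hrT
          have hmem : Set.Ico (-δ) T ∈ nhds s := by
            refine Filter.mem_of_superset (isOpen_Ioo.mem_nhds ?_) Set.Ioo_subset_Ico_self
            exact ⟨by linarith [hs.1], hsT⟩
          exact (hode s ⟨hs0, hsT⟩).hasDerivAt hmem
        have haem : AEStronglyMeasurable g (volume.restrict (Set.Ioc t0 r)) := by
          rw [← Measure.restrict_congr_set MeasureTheory.Ioo_ae_eq_Ioc]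
          refine ((stronglyMeasurable_deriv x).aestronglyMeasurable.restrict).congr ?_
          refine (ae_restrict_iff' measurableSet_Ioo).2 (ae_of_all _ fun s hs => ?_)
          exact (hderiv s hs).deriv
        have hint : IntervalIntegrable g volume t0 r := by
          rw [intervalIntegrable_iff_integrableOn_Ioc_of_le hr.1]
          refine ⟨haem, HasFiniteIntegral.restrict_of_bounded (C := Lf*(Q+M'))
            measure_Ioc_lt_top ?_⟩
          refine (ae_restrict_iff' measurableSet_Ioc).2 (ae_of_all _ fun s hs => ?_)
          exact hgb s hs.1 (hs.2.trans hr.2)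
        have hcont' : ContinuousOn x (Set.Icc t0 r) :=
          hx.mono (fun s hs => ⟨by linarith [hs.1], lt_of_le_of_lt hs.2 hrT⟩)
        have hftc : ∫ s in t0..r, g s = x r - x t0 :=
          intervalIntegral.integral_eq_sub_of_hasDeriv_right_of_le hr.1 hcont'
            (fun s hs => (hderiv s hs).hasDerivWithinAt) hint
        have hnorm : ‖x r - x t0‖ ≤ Lf*(Q+M') * |r - t0| := by
          rw [← hftc]
          refine intervalIntegral.norm_integral_le_of_norm_le_const fun s hs => ?_
          rw [Set.uIoc_of_le hr.1] at hs
          exact hgb s hs.1 (hs.2.trans hr.2)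
        have habs : |r - t0| = r - t0 := abs_of_nonneg (by linarith [hr.1])
        have hxt0 : ‖x t0‖ ≤ B := hB t0 (by linarith) ht0T (le_refl _)
        have h3 : Lf*(Q+M') * |r - t0| ≤ (Q + M')/2 := by
          rw [habs]
          have h4 : r - t0 ≤ h := by linarith [hr.2]
          have h5 : Lf*(Q+M')*(r-t0) ≤ Lf*(Q+M')*h := by
            apply mul_le_mul_of_nonneg_left h4 (by positivity)
          calc Lf*(Q+M')*(r-t0) ≤ Lf*(Q+M')*h := h5
          _ = (Q+M')/2 := by rw [mul_comm Lf (Q+M'), mul_assoc, hLfh]; ring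
        calc ‖x r‖ ≤ ‖x t0‖ + ‖x r - x t0‖ := by
              have := norm_add_le (x t0) (x r - x t0); simpa using this
        _ ≤ B + (Q + M')/2 := add_le_add hxt0 (hnorm.trans h3)
      have hQb : Q ≤ B + (Q+M')/2 := by
        refine csSup_le ((Set.nonempty_Icc.2 hδt).image _) ?_
        rintro q ⟨s, hs, rfl⟩
        by_cases hst0 : s ≤ t0
        · exact (hB s hs.1 (lt_of_le_of_lt hs.2 ht2) hst0).trans (by linarith)
        · exact hmain s ⟨le_of_not_ge hst0, hs.2⟩
      have hQfin : Q ≤ 2*B + M' := by linarith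
      exact (hQle t ⟨hδt, le_refl t⟩).trans hQfin
  obtain ⟨B, hB0, hB⟩ := key ⌈T * (2*Lf)⌉₊
  refine ⟨B, fun t ht => hB t ht.1 ht.2 ?_⟩
  have h1 : T * (2*Lf) ≤ (⌈T * (2*Lf)⌉₊ : ℝ) := Nat.le_ceil _
  have h2 : h * (2*Lf) = 1 := by rw [hh]; field_simp
  nlinarith [ht.2, mul_le_mul_of_nonneg_right h1 (le_of_lt hhpos)]
end

section
/- There exist constants c > 0 and b > 0 such that for all x, μ ∈ ℝ: x·( sin(x⁵)/(1 + x⁴) − (x + μ)³ ) ≤ −(c/2)·x⁴ + b·μ⁴. -/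
/-- The ISS Lyapunov estimate for the scalar example: there are `c, b > 0` with
`x·(sin(x⁵)/(1+x⁴) - (x+μ)³) ≤ -(c/2) x⁴ + b μ⁴` for all `x, μ`. -/
theorem scalar_example_ISS_lyapunov_estimate :
    ∃ c b : ℝ, 0 < c ∧ 0 < b ∧ ∀ x μ : ℝ,
      x * (Real.sin (x ^ 5) / (1 + x ^ 4) - (x + μ) ^ 3) ≤ -(c / 2) * x ^ 4 + b * μ ^ 4 := by
  refine ⟨1/2, 1000, by norm_num, by norm_num, fun x μ => ?_⟩
  have hden : (0:ℝ) < 1 + x ^ 4 := by positivity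
  have hsin : x * Real.sin (x ^ 5) ≤ x ^ 6 := by
    calc x * Real.sin (x ^ 5) ≤ |x * Real.sin (x ^ 5)| := le_abs_self _
      _ = |x| * |Real.sin (x ^ 5)| := abs_mul _ _
      _ ≤ |x| * |x ^ 5| := by
          exact mul_le_mul_of_nonneg_left Real.abs_sin_le_abs (abs_nonneg x)
      _ = |x ^ 6| := by rw [← abs_mul]; ring_nf
      _ = x ^ 6 := by
          rw [abs_of_nonneg]; positivity
  have h1 : x * (Real.sin (x ^ 5) / (1 + x ^ 4)) ≤ x ^ 4 / 2 := by
    rw [mul_div_assoc', div_le_div_iff₀ hden (by norm_num)]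
    nlinarith [sq_nonneg (x ^ 2 - x ^ 4), sq_nonneg x]
  have h2 : -(x * (x + μ) ^ 3) ≤ -(3/4) * x ^ 4 + 1000 * μ ^ 4 := by
    nlinarith [sq_nonneg (x ^ 2 + 6 * x * μ - 40 * μ ^ 2), sq_nonneg ((28 * x + 121 * μ) * μ),
      sq_nonneg (μ ^ 2)]
  have := add_le_add h1 h2
  calc x * (Real.sin (x ^ 5) / (1 + x ^ 4) - (x + μ) ^ 3)
      = x * (Real.sin (x ^ 5) / (1 + x ^ 4)) + -(x * (x + μ) ^ 3) := by ring
    _ ≤ x ^ 4 / 2 + (-(3/4) * x ^ 4 + 1000 * μ ^ 4) := this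
    _ ≤ -(1/2 / 2) * x ^ 4 + 1000 * μ ^ 4 := by nlinarith [pow_pos (by norm_num : (0:ℝ) < 1) 1]
end
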